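/- arXiv:2311.01474 — 5 statements merged into one kernel-verified Lean document; each statement's English description precedes it below -/
import Mathlib

section
/- Define G : ℕ × ℕ → ℕ × ℕ by G (n, m) = (n', m') where n' = ((n - 1) % m) + 1 and m' = ((m - 1) % n') + 1. Then for all natural numbers n and m with 1 ≤ n and 1 ≤ m there exists k such that G^[k] (n, m) = (gcd(n, m), gcd(n, m)). (Correctness of the nested-loop variant of Euclid's algorithm: 'while n ≠ m do (while n > m do n := n − m od; while m > n do m := m − n od) od' halts in a state with n = m = gcd of the inputs.) -/
/-- One pass of the nested-loop variant of Euclid's algorithm. -/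
def G : ℕ × ℕ → ℕ × ℕ := fun p =>
  let n' := (p.1 - 1) % p.2 + 1
  (n', (p.2 - 1) % n' + 1)

lemma step_gcd (a b : ℕ) (ha : 1 ≤ a) (hb : 1 ≤ b) :
    Nat.gcd ((a - 1) % b + 1) b = Nat.gcd a b := by
  have h : a = (a - 1) % b + 1 + ((a - 1) / b) * b := by
    have := Nat.div_add_mod (a - 1) b
    have h2 : b * ((a - 1) / b) = ((a - 1) / b) * b := Nat.mul_comm _ _
    omega
  conv_rhs => rw [h]
  rw [Nat.gcd_add_mul_right_left]

theorem nested_euclid_correct (n m : ℕ) (hn : 1 ≤ n) (hm : 1 ≤ m) :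
    ∃ k : ℕ, G^[k] (n, m) = (Nat.gcd n m, Nat.gcd n m) := by
  suffices H : ∀ s n m, 1 ≤ n → 1 ≤ m → n + m = s →
      ∃ k : ℕ, G^[k] (n, m) = (Nat.gcd n m, Nat.gcd n m) from H (n+m) n m hn hm rfl
  clear hn hm n m
  intro s
  induction s using Nat.strong_induction_on with
  | _ s ih =>
  intro n m hn hm hs
  by_cases hnm : n = m
  · subst hnm
    exact ⟨0, by simp [Nat.gcd_self]⟩
  · set n' := (n - 1) % m + 1 with hn'
    set m' := (m - 1) % n' + 1 with hm'
    have hn'1 : 1 ≤ n' := Nat.le_add_left 1 _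
    have hm'1 : 1 ≤ m' := Nat.le_add_left 1 _
    have hn'le : n' ≤ m := by
      have := Nat.mod_lt (n - 1) (show 0 < m by omega); omega
    have hm'le : m' ≤ n' := by
      have := Nat.mod_lt (m - 1) (show 0 < n' by omega); omega
    have hlt : n' + m' < n + m := by
      rcases Nat.lt_or_ge n m with h | h
      · have : n' = n := by
          have : (n - 1) % m = n - 1 := Nat.mod_eq_of_lt (by omega)
          omega
        omega
      · omega
    have hgcd : Nat.gcd n' m' = Nat.gcd n m := by
      rw [hm', Nat.gcd_comm n', step_gcd m n' hm hn'1, Nat.gcd_comm m,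
        hn', step_gcd n m hn hm]
    obtain ⟨k, hk⟩ := ih (n' + m') (hs ▸ hlt) n' m' hn'1 hm'1 rfl
    refine ⟨k + 1, ?_⟩
    rw [Function.iterate_succ_apply]
    have : G (n, m) = (n', m') := rfl
    rw [this, hk, hgcd]
end

section
/- Consider the nonstandard structure NSN = {p : ℤ × ℚ // 0 ≤ p.2 ∧ (p.2 = 0 → 0 ≤ p.1)}, with zero = ⟨(0, 0)⟩, successor s x = ⟨(x.1 + 1, x.2)⟩, and componentwise addition x + y = ⟨(x.1 + y.1, x.2 + y.2)⟩. Then: (1) for all x, s x ≠ zero; (2) s is injective, i.e. s x = s y → x = y; (3) for all x, x + zero = x; (4) for all x and y, x + s y = s (x + y). (The structure NSN satisfies the successor and addition axioms of the algorithmic theory of addition Th₁.) -/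
/-- The nonstandard structure: pairs (k, x) of an integer and a nonnegative rational,
with k nonnegative whenever x = 0. -/
abbrev NSN := {p : ℤ × ℚ // 0 ≤ p.2 ∧ (p.2 = 0 → 0 ≤ p.1)}

/-- Zero of NSN. -/
def NSN.zero : NSN := ⟨(0, 0), by norm_num⟩

/-- Successor on NSN. -/
def NSN.s (x : NSN) : NSN :=
  ⟨(x.val.1 + 1, x.val.2), x.property.1, fun h => by have := x.property.2 h; omega⟩

/-- Componentwise addition on NSN. -/
def NSN.add (x y : NSN) : NSN :=
  ⟨(x.val.1 + y.val.1, x.val.2 + y.val.2), by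
    have hx2 := x.property.1
    have hy2 := y.property.1
    refine ⟨by positivity, fun h => ?_⟩
    have h' : x.val.2 + y.val.2 = 0 := h
    have hx : x.val.2 = 0 := by linarith
    have hy : y.val.2 = 0 := by linarith
    have := x.property.2 hx
    have := y.property.2 hy
    omega⟩

theorem NSN_satisfies_successor_and_addition_axioms :
    (∀ x : NSN, NSN.s x ≠ NSN.zero) ∧
    (∀ x y : NSN, NSN.s x = NSN.s y → x = y) ∧
    (∀ x : NSN, NSN.add x NSN.zero = x) ∧
    (∀ x y : NSN, NSN.add x (NSN.s y) = NSN.s (NSN.add x y)) := by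
  refine ⟨?_, ?_, ?_, ?_⟩
  · intro x h
    have h1 := congrArg (fun z : NSN => z.val.1) h
    have h2 := congrArg (fun z : NSN => z.val.2) h
    simp [NSN.s, NSN.zero] at h1 h2
    have := x.property.2 h2
    omega
  · intro x y h
    have h1 := congrArg (fun z : NSN => z.val.1) h
    have h2 := congrArg (fun z : NSN => z.val.2) h
    simp [NSN.s] at h1 h2
    exact Subtype.ext (Prod.ext h1 h2)
  · intro x
    exact Subtype.ext (Prod.ext (by simp [NSN.add, NSN.zero]) (by simp [NSN.add, NSN.zero]))
  · intro x y
    exact Subtype.ext (Prod.ext (by simp [NSN.add, NSN.s]; ring) (by simp [NSN.add, NSN.s]))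
end

section
/- Consider the nonstandard structure NSN = {p : ℤ × ℚ // 0 ≤ p.2 ∧ (p.2 = 0 → 0 ≤ p.1)}, with zero = ⟨(0, 0)⟩, successor s x = ⟨(x.1 + 1, x.2)⟩, componentwise addition, and the order lt a b ↔ (a.2 < b.2 ∨ (a.2 = b.2 ∧ a.1 < b.1)). Then: (1) for all a, b in NSN, lt a b holds if and only if there exists z in NSN with b = a + s z; (2) the order is trichotomous: for all a, b in NSN, lt a b ∨ a = b ∨ lt b a. -/
/-- The order on NSN. -/
def NSN.lt (a b : NSN) : Prop :=
  a.val.2 < b.val.2 ∨ (a.val.2 = b.val.2 ∧ a.val.1 < b.val.1)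

theorem NSN_lt_iff_add_succ_and_trichotomy :
    (∀ a b : NSN, NSN.lt a b ↔ ∃ z : NSN, b = NSN.add a (NSN.s z)) ∧
    (∀ a b : NSN, NSN.lt a b ∨ a = b ∨ NSN.lt b a) := by
  constructor
  · intro a b
    constructor
    · rintro (h | ⟨h2, h1⟩)
      · refine ⟨⟨(b.val.1 - a.val.1 - 1, b.val.2 - a.val.2), ⟨by simp; linarith, fun h' => by simp at h'; linarith⟩⟩, ?_⟩
        exact Subtype.ext (Prod.ext (by simp [NSN.add, NSN.s]) (by simp [NSN.add, NSN.s]))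
      · refine ⟨⟨(b.val.1 - a.val.1 - 1, 0), by norm_num; omega⟩, ?_⟩
        apply Subtype.ext
        simp [NSN.add, NSN.s]
        exact Prod.ext rfl h2.symm
    · rintro ⟨z, hz⟩
      have h1 : b.val.1 = a.val.1 + (z.val.1 + 1) := congrArg (fun p => p.val.1) hz
      have h2 : b.val.2 = a.val.2 + z.val.2 := congrArg (fun p => p.val.2) hz
      rcases lt_or_eq_of_le z.property.1 with hp | hp
      · left; linarith
      · right
        have := z.property.2 hp.symm
        constructor
        · rw [h2, ← hp]; ring
        · omega
  · intro a b
    rcases lt_trichotomy a.val.2 b.val.2 with h | h | h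
    · left; left; exact h
    · rcases lt_trichotomy a.val.1 b.val.1 with h1 | h1 | h1
      · left; right; exact ⟨h, h1⟩
      · right; left; exact Subtype.ext (Prod.ext h1 h)
      · right; right; right; exact ⟨h.symm, h1⟩
    · right; right; left; exact h
end

section
/- Consider the nonstandard structure NSN = {p : ℤ × ℚ // 0 ≤ p.2 ∧ (p.2 = 0 → 0 ≤ p.1)} with zero = ⟨(0, 0)⟩, successor s x = ⟨(x.1 + 1, x.2)⟩, predecessor P x = zero if x = zero and P x = ⟨(x.1 - 1, x.2)⟩ otherwise, order lt a b ↔ (a.2 < b.2 ∨ (a.2 = b.2 ∧ a.1 < b.1)), and truncated subtraction a ∸ b = zero if lt a b and a ∸ b = ⟨(a.1 - b.1, a.2 - b.2)⟩ otherwise. Then: (1) P zero = zero; (2) for all x, P (s x) = x; (3) for all a, a ∸ zero = a; (4) for all a and b, a ∸ s b = P (a ∸ b). (NSN satisfies the predecessor and subtraction axioms of the theory Th₁.) -/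
instance (a b : NSN) : Decidable (NSN.lt a b) :=
  inferInstanceAs (Decidable (a.val.2 < b.val.2 ∨ (a.val.2 = b.val.2 ∧ a.val.1 < b.val.1)))

/-- Predecessor on NSN. -/
def NSN.P (x : NSN) : NSN :=
  if h : x = NSN.zero then NSN.zero
  else
    ⟨(x.val.1 - 1, x.val.2), by
      refine ⟨x.property.1, fun h2 => ?_⟩
      have h2' : x.val.2 = 0 := h2
      have h1 := x.property.2 h2'
      have hne : x.val.1 ≠ 0 := by
        intro h3
        exact h (Subtype.ext (by simp [NSN.zero, Prod.ext_iff, h3, h2']))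
      omega⟩

/-- Truncated subtraction on NSN. -/
def NSN.sub (a b : NSN) : NSN :=
  if h : NSN.lt a b then NSN.zero
  else
    ⟨(a.val.1 - b.val.1, a.val.2 - b.val.2), by
      unfold NSN.lt at h
      push_neg at h
      refine ⟨show (0 : ℚ) ≤ a.val.2 - b.val.2 by linarith [h.1], fun h2 => ?_⟩
      have h2' : a.val.2 - b.val.2 = 0 := h2
      have hq : a.val.2 = b.val.2 := by linarith [sub_eq_zero.mp h2']
      have := h.2 hq
      show (0 : ℤ) ≤ a.val.1 - b.val.1
      omega⟩

theorem NSN_satisfies_predecessor_and_subtraction_axioms :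
    (NSN.P NSN.zero = NSN.zero) ∧
    (∀ x : NSN, NSN.P (NSN.s x) = x) ∧
    (∀ a : NSN, NSN.sub a NSN.zero = a) ∧
    (∀ a b : NSN, NSN.sub a (NSN.s b) = NSN.P (NSN.sub a b)) := by
  have hzero : ∀ x : NSN, x = NSN.zero ↔ (x.val.1 = 0 ∧ x.val.2 = 0) := by
    intro x
    constructor
    · intro h; rw [h]; exact ⟨rfl, rfl⟩
    · intro ⟨h1, h2⟩; exact Subtype.ext (Prod.ext h1 h2)
  refine ⟨?_, ?_, ?_, ?_⟩
  · simp [NSN.P]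
  · intro x
    have hne : NSN.s x ≠ NSN.zero := by
      intro h
      obtain ⟨h1, h2⟩ := (hzero _).mp h
      have h2' : x.val.2 = 0 := h2
      have := x.property.2 h2'
      have h1' : x.val.1 + 1 = 0 := h1
      omega
    rw [NSN.P, dif_neg hne]
    exact Subtype.ext (Prod.ext (by show x.val.1 + 1 - 1 = x.val.1; omega) rfl)
  · intro a
    have hnlt : ¬ NSN.lt a NSN.zero := by
      unfold NSN.lt
      push_neg
      refine ⟨a.property.1, fun h => ?_⟩
      exact a.property.2 h
    rw [NSN.sub, dif_neg hnlt]
    exact Subtype.ext (Prod.ext (by show a.val.1 - 0 = a.val.1; ring)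
      (by show a.val.2 - 0 = a.val.2; ring))
  · intro a b
    by_cases h1 : NSN.lt a b
    · have h2 : NSN.lt a (NSN.s b) := by
        unfold NSN.lt at h1 ⊢
        simp only [NSN.s]
        rcases h1 with h | ⟨h, h'⟩
        · exact Or.inl h
        · exact Or.inr ⟨h, by omega⟩
      rw [NSN.sub, dif_pos h2, NSN.sub, dif_pos h1, NSN.P, dif_pos rfl]
    · by_cases h2 : NSN.lt a (NSN.s b)
      · have hlt := h2
        unfold NSN.lt at h1 h2
        simp only [NSN.s] at h2
        push_neg at h1
        have heq2 : a.val.2 = b.val.2 := by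
          rcases h2 with h | ⟨h, _⟩
          · exact absurd h (not_lt.mpr h1.1)
          · exact h
        have heq1 : a.val.1 = b.val.1 := by
          have := h1.2 heq2
          rcases h2 with h | ⟨_, h'⟩
          · exact absurd h (not_lt.mpr h1.1)
          · omega
        have hnlt : ¬ NSN.lt a b := by
          unfold NSN.lt; push_neg
          exact ⟨le_of_eq heq2.symm, fun _ => le_of_eq heq1.symm⟩
        rw [NSN.sub, dif_pos hlt, NSN.sub, dif_neg hnlt, NSN.P, dif_pos]
        exact Subtype.ext (Prod.ext (show a.val.1 - b.val.1 = 0 by omega)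
          (show a.val.2 - b.val.2 = 0 by rw [heq2]; ring))
      · unfold NSN.lt at h1 h2
        simp only [NSN.s] at h2
        push_neg at h1 h2
        have hnlt : ¬ NSN.lt a b := by unfold NSN.lt; push_neg; exact h1
        have hnlt' : ¬ NSN.lt a (NSN.s b) := by
          unfold NSN.lt; simp only [NSN.s]; push_neg; exact h2
        rw [NSN.sub, dif_neg hnlt', NSN.sub, dif_neg hnlt, NSN.P, dif_neg]
        · exact Subtype.ext (Prod.ext
            (show a.val.1 - (b.val.1 + 1) = a.val.1 - b.val.1 - 1 by ring) rfl)
        · intro h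
          obtain ⟨ha, hb⟩ := (hzero _).mp h
          have hb' : a.val.2 - b.val.2 = 0 := hb
          have heq2 : a.val.2 = b.val.2 := by linarith [sub_eq_zero.mp hb']
          have hh := h2.2 heq2
          have ha' : a.val.1 - b.val.1 = 0 := ha
          omega
end

section
/- In the nonstandard structure NSN = {p : ℤ × ℚ // 0 ≤ p.2 ∧ (p.2 = 0 → 0 ≤ p.1)} with order lt a b ↔ (a.2 < b.2 ∨ (a.2 = b.2 ∧ a.1 < b.1)) and truncated subtraction a ∸ b = zero if lt a b and ⟨(a.1 - b.1, a.2 - b.2)⟩ otherwise, define the Euclid step E : NSN × NSN → NSN × NSN by E (n, m) = (n, m) if n = m, E (n, m) = (n ∸ m, m) if lt m n, and E (n, m) = (n, m ∸ n) otherwise. Let a = ⟨(12, 0)⟩ and b = ⟨(15, 1/2)⟩. Then for every natural number k, E^[k] (a, b) = (a, ⟨(15 - 12·k, 1/2)⟩); in particular the two components of E^[k] (a, b) are never equal, so Euclid's algorithm executed in NSN on the arguments (a, b) does not halt. -/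
/-- One step of Euclid's subtraction algorithm executed in the structure NSN. -/
def E : NSN × NSN → NSN × NSN := fun p =>
  if p.1 = p.2 then p
  else if NSN.lt p.2 p.1 then (NSN.sub p.1 p.2, p.2)
  else (p.1, NSN.sub p.2 p.1)

theorem euclid_diverges_in_NSN :
    ∀ k : ℕ,
      E^[k] ((⟨(12, 0), by norm_num⟩ : NSN), (⟨(15, 1/2), by norm_num⟩ : NSN)) =
        ((⟨(12, 0), by norm_num⟩ : NSN), (⟨(15 - 12 * (k : ℤ), 1/2), by norm_num⟩ : NSN)) ∧
      (E^[k] ((⟨(12, 0), by norm_num⟩ : NSN), (⟨(15, 1/2), by norm_num⟩ : NSN))).1 ≠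
        (E^[k] ((⟨(12, 0), by norm_num⟩ : NSN), (⟨(15, 1/2), by norm_num⟩ : NSN))).2 := by
  have key : ∀ m : ℤ, E ((⟨(12, 0), by norm_num⟩ : NSN), (⟨(m, 1/2), by norm_num⟩ : NSN)) =
      ((⟨(12, 0), by norm_num⟩ : NSN), (⟨(m - 12, 1/2), by norm_num⟩ : NSN)) := by
    intro m
    have hne : (⟨(12, 0), by norm_num⟩ : NSN) ≠ (⟨(m, 1/2), by norm_num⟩ : NSN) := by
      intro h
      have := congrArg (fun x : NSN => x.val.2) h
      norm_num at this
    have hnlt : ¬ NSN.lt (⟨(m, 1/2), by norm_num⟩ : NSN) (⟨(12, 0), by norm_num⟩ : NSN) := by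
      unfold NSN.lt; push_neg; norm_num
    simp only [E, hne, if_false, hnlt]
    refine Prod.ext rfl ?_
    show NSN.sub _ _ = _
    unfold NSN.sub
    rw [dif_neg hnlt]
    norm_num
  intro k
  induction k with
  | zero =>
    refine ⟨by norm_num, ?_⟩
    intro h
    have := congrArg (fun x : NSN => x.val.2) h
    norm_num at this
  | succ n ih =>
    rw [Function.iterate_succ_apply', ih.1, key]
    constructor
    · push_cast; ring_nf
    · intro h
      have := congrArg (fun x : NSN => x.val.2) h
      norm_num at this
end
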